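/- arXiv:2005.02812 — 3 statements merged into one kernel-verified Lean document; each statement's English description precedes it below -/
import Mathlib

section
/- Let λ ∈ (0,1) and let (f_n)_{n∈ℤ} be the densities of the type-III_λ construction: f_n ≡ 1 for n ≤ 1 and, for n ≥ 2, f_n = λ on A_n, λ⁻¹ on B_n, 1 elsewhere, where A_n, B_n are disjoint decreasing intervals with |A_n| = a_n = λ⁻¹|B_n| and a_n = 1/((n+4)log(n+4)). Then ∑_{n∈ℤ} ∫₀¹ (√f_n(u) − √f_{n−1}(u))² du < ∞. -/
/-!
The densities `f n` and `f (n - 1)` agree outside `(A (n-1) \ A n) ∪ (B (n-1) \ B n)` and take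
values in `[0, λ⁻¹]`, so the `n`-th term is at most `λ⁻¹` times the decrease of
`|A n| + |B n|` from `n - 1` to `n`. These decreases telescope, hence are summable.
-/

open MeasureTheory Set

lemma sq_sqrt_sub_sqrt_le {x y M : ℝ} (hx : 0 ≤ x) (hy : 0 ≤ y) (hxM : x ≤ M) (hyM : y ≤ M) :
    (√x - √y) ^ 2 ≤ M := by
  have := Real.sqrt_nonneg x
  have := Real.sqrt_nonneg y
  rcases le_total √x √y with h | h
  · nlinarith [Real.sq_sqrt hy]
  · nlinarith [Real.sq_sqrt hx]

lemma integral_le_mul_measureReal_of_support_subset {α : Type*} [MeasurableSpace α]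
    {μ : Measure α} {g : α → ℝ} {s : Set α} {C : ℝ} (hs : MeasurableSet s) (hμs : μ s ≠ ⊤)
    (hg0 : ∀ x, 0 ≤ g x) (hgC : ∀ x, g x ≤ C) (hgs : ∀ x ∉ s, g x = 0) :
    ∫ x, g x ∂μ ≤ C * μ.real s := by
  have hle : ∀ x, g x ≤ s.indicator (fun _ => C) x := fun x => by
    by_cases hx : x ∈ s
    · simpa [hx] using hgC x
    · simp [hx, hgs x hx]
  calc ∫ x, g x ∂μ ≤ ∫ x, s.indicator (fun _ => C) x ∂μ :=
        integral_mono_of_nonneg (.of_forall hg0) ((integrableOn_const hμs).integrable_indicator hs)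
          (.of_forall hle)
    _ = C * μ.real s := by rw [integral_indicator_const C hs, smul_eq_mul, mul_comm]

lemma Antitone.summable_sub_succ {b : ℕ → ℝ} (hb : Antitone b) (hb0 : ∀ k, 0 ≤ b k) :
    Summable fun k => b k - b (k + 1) :=
  summable_of_sum_range_le (c := b 0) (fun k => sub_nonneg.2 (hb k.le_succ))
    fun n => by rw [Finset.sum_range_sub' b]; linarith [hb0 n]

section StepDensity

variable {α : Type*} {l : ℝ} {A A' B B' : Set α} {u : α}

open Classical in
noncomputable def stepDensity (l : ℝ) (A B : Set α) (u : α) : ℝ :=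
  if u ∈ A then l else if u ∈ B then l⁻¹ else 1

lemma stepDensity_mem_Icc (hl : l ∈ Ioo 0 1) : stepDensity l A B u ∈ Icc 0 l⁻¹ := by
  have h1 : 1 ≤ l⁻¹ := one_le_inv₀ hl.1 |>.2 hl.2.le
  unfold stepDensity
  split_ifs
  · exact ⟨hl.1.le, hl.2.le.trans h1⟩
  · exact ⟨inv_nonneg.2 hl.1.le, le_rfl⟩
  · exact ⟨zero_le_one, h1⟩

lemma stepDensity_eq_of_notMem (hA : A ⊆ A') (hB : B ⊆ B') (hu : u ∉ (A' \ A) ∪ (B' \ B)) :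
    stepDensity l A B u = stepDensity l A' B' u := by
  simp only [mem_union, mem_sdiff, not_or, not_and, not_not] at hu
  have hAu : u ∈ A ↔ u ∈ A' := ⟨(hA ·), hu.1⟩
  have hBu : u ∈ B ↔ u ∈ B' := ⟨(hB ·), hu.2⟩
  classical exact if_congr hAu rfl (if_congr hBu rfl rfl)

lemma integral_sq_sqrt_stepDensity_sub_le [MeasurableSpace α] (μ : Measure α) [IsFiniteMeasure μ]
    (hl : l ∈ Ioo 0 1) (hA : A ⊆ A') (hB : B ⊆ B') (hAm : MeasurableSet A) (hBm : MeasurableSet B)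
    (hA'm : MeasurableSet A') (hB'm : MeasurableSet B') :
    ∫ u, (√(stepDensity l A B u) - √(stepDensity l A' B' u)) ^ 2 ∂μ
      ≤ l⁻¹ * ((μ.real A' - μ.real A) + (μ.real B' - μ.real B)) := by
  calc _ ≤ l⁻¹ * μ.real ((A' \ A) ∪ (B' \ B)) := by
        refine integral_le_mul_measureReal_of_support_subset ((hA'm.diff hAm).union (hB'm.diff hBm))
          (measure_ne_top _ _) (fun _ => sq_nonneg _) (fun u => ?_) (fun u hu => ?_)
        · have h := stepDensity_mem_Icc (A := A) (B := B) (u := u) hl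
          have h' := stepDensity_mem_Icc (A := A') (B := B') (u := u) hl
          exact sq_sqrt_sub_sqrt_le h.1 h'.1 h.2 h'.2
        · rw [stepDensity_eq_of_notMem hA hB hu, sub_self, sq, mul_zero]
    _ ≤ l⁻¹ * (μ.real (A' \ A) + μ.real (B' \ B)) := by
        gcongr
        · exact inv_nonneg.2 hl.1.le
        · exact measureReal_union_le _ _
    _ = l⁻¹ * ((μ.real A' - μ.real A) + (μ.real B' - μ.real B)) := by
        rw [measureReal_sdiff hA hAm, measureReal_sdiff hB hBm]

end StepDensity

open Classical in
theorem stmt8_general (l : ℝ) (hl : l ∈ Set.Ioo (0 : ℝ) 1)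
    (A B : ℕ → Set ℝ)
    (hAint : ∀ n, 2 ≤ n → ∃ p q : ℝ, A n = Set.Ioo p q)
    (hBint : ∀ n, 2 ≤ n → ∃ p q : ℝ, B n = Set.Ioo p q)
    (hAdec : ∀ n, 2 ≤ n → A (n + 1) ⊆ A n)
    (hBdec : ∀ n, 2 ≤ n → B (n + 1) ⊆ B n)
    (f : ℤ → ℝ → ℝ)
    (hf1 : ∀ n : ℤ, n ≤ 1 → ∀ u, f n u = 1)
    (hf2 : ∀ n : ℤ, 2 ≤ n → ∀ u,
      f n u = if u ∈ A n.toNat then l else if u ∈ B n.toNat then l⁻¹ else 1) :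
    Summable (fun n : ℤ =>
      ∫ u in Set.Icc (0 : ℝ) 1, (Real.sqrt (f n u) - Real.sqrt (f (n - 1) u)) ^ 2) := by
  set μ := volume.restrict (Icc (0 : ℝ) 1)
  have : IsFiniteMeasure μ := isFiniteMeasure_restrict.2 measure_Icc_lt_top.ne
  have hAm : ∀ k : ℕ, MeasurableSet (A (k + 2)) := fun k => by
    obtain ⟨p, q, h⟩ := hAint (k + 2) le_add_self
    exact h ▸ measurableSet_Ioo
  have hBm : ∀ k : ℕ, MeasurableSet (B (k + 2)) := fun k => by
    obtain ⟨p, q, h⟩ := hBint (k + 2) le_add_self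
    exact h ▸ measurableSet_Ioo
  have hf : ∀ k : ℕ, f (k + 2 : ℕ) = stepDensity l (A (k + 2)) (B (k + 2)) := fun k =>
    funext (hf2 _ (by omega))
  set b : ℕ → ℝ := fun k => μ.real (A (k + 2)) + μ.real (B (k + 2))
  have hb : Antitone b := antitone_nat_of_succ_le fun k =>
    add_le_add (measureReal_mono (hAdec _ le_add_self)) (measureReal_mono (hBdec _ le_add_self))
  refine .of_nat_of_neg ?_ ?_
  · rw [← summable_nat_add_iff 3]
    refine .of_nonneg_of_le (fun _ => integral_nonneg fun _ => sq_nonneg _) (fun k => ?_)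
      ((hb.summable_sub_succ fun _ => by positivity).mul_left l⁻¹)
    have hk : ((k + 3 : ℕ) : ℤ) - 1 = (k + 2 : ℕ) := by push_cast; ring
    rw [hk, show k + 3 = k + 1 + 2 from rfl, hf, hf]
    linarith [integral_sq_sqrt_stepDensity_sub_le μ hl (hAdec _ le_add_self)
      (hBdec _ le_add_self) (hAm (k + 1)) (hBm (k + 1)) (hAm k) (hBm k)]
  · convert summable_zero with n
    simp [hf1 (-n) (by omega), hf1 (-n - 1) (by omega)]

open Classical in
/-- Kakutani square-root summability for the type-IIIλ densities:
`∑_{n ∈ ℤ} ∫₀¹ (√f_n - √f_{n-1})² du < ∞`. -/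
theorem stmt8 (l : ℝ) (hl : l ∈ Set.Ioo (0 : ℝ) 1)
    (a : ℕ → ℝ) (ha : ∀ n : ℕ, 2 ≤ n → a n = 1 / ((n + 4) * Real.log (n + 4)))
    (A B : ℕ → Set ℝ)
    (hAint : ∀ n, 2 ≤ n → ∃ p q : ℝ, A n = Set.Ioo p q)
    (hBint : ∀ n, 2 ≤ n → ∃ p q : ℝ, B n = Set.Ioo p q)
    (hAsub : ∀ n, 2 ≤ n → A n ⊆ Set.Icc 0 1)
    (hBsub : ∀ n, 2 ≤ n → B n ⊆ Set.Icc 0 1)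
    (hdisj : ∀ m n, 2 ≤ m → 2 ≤ n → Disjoint (A m) (B n))
    (hAdec : ∀ n, 2 ≤ n → A (n + 1) ⊆ A n)
    (hBdec : ∀ n, 2 ≤ n → B (n + 1) ⊆ B n)
    (hvolA : ∀ n, 2 ≤ n → volume (A n) = ENNReal.ofReal (a n))
    (hvolB : ∀ n, 2 ≤ n → volume (B n) = ENNReal.ofReal (l * a n))
    (f : ℤ → ℝ → ℝ)
    (hf1 : ∀ n : ℤ, n ≤ 1 → ∀ u, f n u = 1)
    (hf2 : ∀ n : ℤ, 2 ≤ n → ∀ u,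
      f n u = if u ∈ A n.toNat then l else if u ∈ B n.toNat then l⁻¹ else 1) :
    Summable (fun n : ℤ =>
      ∫ u in Set.Icc (0 : ℝ) 1, (Real.sqrt (f n u) - Real.sqrt (f (n - 1) u)) ^ 2) :=
  stmt8_general l hl A B hAint hBint hAdec hBdec f hf1 hf2
end

section
/- Let λ ∈ (0,1), and suppose A' ⊆ A and B' ⊆ B with A, B, A', B' measurable subsets of [0,1], A ∩ B = ∅. Let f be the density equal to λ on A', λ⁻¹ on B', 1 elsewhere, and g the density equal to λ on A, λ⁻¹ on B, 1 elsewhere, with |A'| = λ⁻¹|B'|, |A| = λ⁻¹|B|. Then ∫₀¹ (f(u)/g(u))² f(u) du = 1 + (λ⁻² − λ + λ(λ² − λ⁻¹))·(|A| − |A'|). -/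
/-!
The integrand `(f/g)² f` is constant on each piece of the partition of `[0,1]` into `A'`,
`A \ A'`, `B'`, `B \ B'` and the rest, with values `λ`, `λ⁻²`, `λ⁻¹`, `λ²`, `1`. These
pieces have measures `|A'|`, `|A| - |A'|`, `λ|A'|`, `λ(|A| - |A'|)` and `1 - (1 + λ)|A|`,
and summing gives the identity. Integrability is automatic because `f` and `g` take values
in `[λ, λ⁻¹]`.
-/

open MeasureTheory Set

section SetIntegral

variable {α : Type*} [MeasurableSpace α] {μ : Measure α} {F : α → ℝ} {s t : Set α}
  {c : ℝ}

theorem setIntegral_eq_of_eqOn_const (hs : MeasurableSet s) (h : EqOn F (fun _ ↦ c) s) :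
    ∫ x in s, F x ∂μ = μ.real s * c := by
  rw [setIntegral_congr_fun hs h, setIntegral_const, smul_eq_mul]

theorem setIntegral_eq_add_of_eqOn_const_sdiff (hts : t ⊆ s) (hs : MeasurableSet s)
    (ht : MeasurableSet t) (hF : IntegrableOn F s μ) (h : EqOn F (fun _ ↦ c) (s \ t)) :
    ∫ x in s, F x ∂μ = ∫ x in t, F x ∂μ + μ.real (s \ t) * c := by
  rw [← integral_inter_add_sdiff ht hF, inter_eq_right.2 hts,
    setIntegral_eq_of_eqOn_const (hs.diff ht) h]

theorem integrableOn_div_sq_mul {f g : α → ℝ} (hf : Measurable f) (hg : Measurable g)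
    {m M : ℝ} (hm : 0 < m) (hfm : ∀ x, f x ∈ Icc m M) (hgm : ∀ x, g x ∈ Icc m M)
    (hs : μ s ≠ ⊤) :
    IntegrableOn (fun x ↦ (f x / g x) ^ 2 * f x) s μ := by
  refine Measure.integrableOn_of_bounded (M := (M / m) ^ 2 * M) hs (by fun_prop)
    (ae_of_all _ fun x ↦ ?_)
  obtain ⟨hmf, hfM⟩ := hfm x
  obtain ⟨hmg, -⟩ := hgm x
  have : 0 < f x := hm.trans_le hmf
  have : 0 < g x := hm.trans_le hmg
  have : 0 ≤ M := hm.le.trans (hmf.trans hfM)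
  rw [Real.norm_of_nonneg (by positivity)]
  gcongr

end SetIntegral

section Densities

variable {l : ℝ} {A B A' B' S T : Set ℝ}

open Classical in
noncomputable def density (l : ℝ) (S T : Set ℝ) (u : ℝ) : ℝ :=
  if u ∈ S then l else if u ∈ T then l⁻¹ else 1

theorem measurable_density (hS : MeasurableSet S) (hT : MeasurableSet T) :
    Measurable (density l S T) :=
  measurable_const.ite hS (measurable_const.ite hT measurable_const)

theorem density_mem_Icc (hl0 : 0 < l) (hl1 : l ≤ 1) (u : ℝ) :
    density l S T u ∈ Icc l l⁻¹ := by
  have h1 : 1 ≤ l⁻¹ := (one_le_inv₀ hl0).2 hl1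
  unfold density
  split_ifs
  exacts [⟨le_rfl, hl1.trans h1⟩, ⟨hl1.trans h1, le_rfl⟩, ⟨hl1, h1⟩]

noncomputable def secondMomentIntegrand (l : ℝ) (A B A' B' : Set ℝ) (u : ℝ) : ℝ :=
  (density l A' B' u / density l A B u) ^ 2 * density l A' B' u

theorem secondMomentIntegrand_eqOn_inner_left (hl : l ≠ 0) (hA' : A' ⊆ A) :
    EqOn (secondMomentIntegrand l A B A' B') (fun _ ↦ l) A' := fun u hu ↦ by
  simp [secondMomentIntegrand, density, hu, hA' hu, hl]

theorem secondMomentIntegrand_eqOn_outer_left (hB' : B' ⊆ B) (hAB : Disjoint A B) :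
    EqOn (secondMomentIntegrand l A B A' B') (fun _ ↦ (l ^ 2)⁻¹) (A \ A') := fun u hu ↦ by
  simp [secondMomentIntegrand, density, hu.1, hu.2,
    notMem_subset hB' (hAB.notMem_of_mem_left hu.1)]

theorem secondMomentIntegrand_eqOn_inner_right (hl : l ≠ 0) (hA' : A' ⊆ A) (hB' : B' ⊆ B)
    (hAB : Disjoint A B) :
    EqOn (secondMomentIntegrand l A B A' B') (fun _ ↦ l⁻¹) B' := fun u hu ↦ by
  have : u ∉ A := hAB.notMem_of_mem_right (hB' hu)
  simp [secondMomentIntegrand, density, hu, hB' hu, this, notMem_subset hA' this, hl]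

theorem secondMomentIntegrand_eqOn_outer_right (hA' : A' ⊆ A) (hAB : Disjoint A B) :
    EqOn (secondMomentIntegrand l A B A' B') (fun _ ↦ l ^ 2) (B \ B') := fun u hu ↦ by
  have : u ∉ A := hAB.notMem_of_mem_right hu.1
  simp [secondMomentIntegrand, density, hu.1, hu.2, this, notMem_subset hA' this]

theorem secondMomentIntegrand_eqOn_compl (hA' : A' ⊆ A) (hB' : B' ⊆ B) :
    EqOn (secondMomentIntegrand l A B A' B') (fun _ ↦ 1) (A ∪ B)ᶜ := fun u hu ↦ by
  simp only [mem_compl_iff, mem_union, not_or] at hu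
  simp [secondMomentIntegrand, density, hu.1, hu.2, notMem_subset hA' hu.1,
    notMem_subset hB' hu.2]

theorem integrableOn_secondMomentIntegrand (hl0 : 0 < l) (hl1 : l ≤ 1) (hA : MeasurableSet A)
    (hB : MeasurableSet B) (hA' : MeasurableSet A') (hB' : MeasurableSet B') {S : Set ℝ}
    (hS : volume S ≠ ⊤) : IntegrableOn (secondMomentIntegrand l A B A' B') S :=
  integrableOn_div_sq_mul (measurable_density hA' hB') (measurable_density hA hB) hl0
    (density_mem_Icc hl0 hl1) (density_mem_Icc hl0 hl1) hS

theorem setIntegral_secondMomentIntegrand_left (hl : l ≠ 0) (hA : MeasurableSet A)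
    (hA'm : MeasurableSet A') (hA' : A' ⊆ A) (hB' : B' ⊆ B) (hAB : Disjoint A B)
    (hint : IntegrableOn (secondMomentIntegrand l A B A' B') A) :
    ∫ u in A, secondMomentIntegrand l A B A' B' u
      = volume.real A' * l + volume.real (A \ A') * (l ^ 2)⁻¹ := by
  rw [setIntegral_eq_add_of_eqOn_const_sdiff hA' hA hA'm hint
    (secondMomentIntegrand_eqOn_outer_left hB' hAB),
    setIntegral_eq_of_eqOn_const hA'm (secondMomentIntegrand_eqOn_inner_left hl hA')]

theorem setIntegral_secondMomentIntegrand_right (hl : l ≠ 0) (hB : MeasurableSet B)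
    (hB'm : MeasurableSet B') (hA' : A' ⊆ A) (hB' : B' ⊆ B) (hAB : Disjoint A B)
    (hint : IntegrableOn (secondMomentIntegrand l A B A' B') B) :
    ∫ u in B, secondMomentIntegrand l A B A' B' u
      = volume.real B' * l⁻¹ + volume.real (B \ B') * l ^ 2 := by
  rw [setIntegral_eq_add_of_eqOn_const_sdiff hB' hB hB'm hint
    (secondMomentIntegrand_eqOn_outer_right hA' hAB),
    setIntegral_eq_of_eqOn_const hB'm (secondMomentIntegrand_eqOn_inner_right hl hA' hB' hAB)]

end Densities

open Classical in
theorem stmt10_general (l : ℝ) (hl : l ∈ Set.Ioo (0 : ℝ) 1)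
    (A B A' B' : Set ℝ) (aA aA' : ℝ)
    (hAmeas : MeasurableSet A) (hBmeas : MeasurableSet B)
    (hA'meas : MeasurableSet A') (hB'meas : MeasurableSet B')
    (hAsub : A ⊆ Set.Icc 0 1) (hBsub : B ⊆ Set.Icc 0 1)
    (hA' : A' ⊆ A) (hB' : B' ⊆ B) (hdisj : Disjoint A B)
    (hvolA : volume A = ENNReal.ofReal aA)
    (hvolA' : volume A' = ENNReal.ofReal aA')
    (hvolB : volume B = ENNReal.ofReal (l * aA))
    (hvolB' : volume B' = ENNReal.ofReal (l * aA'))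
    (haA : 0 ≤ aA') (haA' : aA' ≤ aA)
    (f g : ℝ → ℝ)
    (hfdef : ∀ u, f u = if u ∈ A' then l else if u ∈ B' then l⁻¹ else 1)
    (hgdef : ∀ u, g u = if u ∈ A then l else if u ∈ B then l⁻¹ else 1) :
    (∫ u in Set.Icc (0 : ℝ) 1, (f u / g u) ^ 2 * f u)
      = 1 + ((l ^ 2)⁻¹ - l + l * (l ^ 2 - l⁻¹)) * (aA - aA') := by
  obtain ⟨hl0, hl1⟩ := hl
  have haA0 : 0 ≤ aA := haA.trans haA'
  have hfin : ∀ S ⊆ Icc (0 : ℝ) 1, volume S ≠ ⊤ := fun S hS ↦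
    measure_ne_top_of_subset hS measure_Icc_lt_top.ne
  have hint : ∀ S ⊆ Icc (0 : ℝ) 1, IntegrableOn (secondMomentIntegrand l A B A' B') S :=
    fun S hS ↦ integrableOn_secondMomentIntegrand hl0 hl1.le hAmeas hBmeas hA'meas hB'meas
      (hfin S hS)
  have hAB : A ∪ B ⊆ Icc 0 1 := union_subset hAsub hBsub
  have hsplit : ∫ u in Icc 0 1, secondMomentIntegrand l A B A' B' u
      = volume.real A' * l + volume.real (A \ A') * (l ^ 2)⁻¹
        + (volume.real B' * l⁻¹ + volume.real (B \ B') * l ^ 2)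
        + volume.real (Icc 0 1 \ (A ∪ B)) * 1 := by
    rw [setIntegral_eq_add_of_eqOn_const_sdiff hAB measurableSet_Icc (hAmeas.union hBmeas)
        (hint _ subset_rfl)
        ((secondMomentIntegrand_eqOn_compl hA' hB').mono (sdiff_subset_compl _ _)),
      setIntegral_union hdisj hBmeas (hint A hAsub) (hint B hBsub),
      setIntegral_secondMomentIntegrand_left hl0.ne' hAmeas hA'meas hA' hB' hdisj (hint A hAsub),
      setIntegral_secondMomentIntegrand_right hl0.ne' hBmeas hB'meas hA' hB' hdisj (hint B hBsub)]
  have hrA : volume.real A = aA := by simp [measureReal_def, hvolA, haA0]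
  have hrA' : volume.real A' = aA' := by simp [measureReal_def, hvolA', haA]
  have hrB : volume.real B = l * aA := by simp [measureReal_def, hvolB, haA0, hl0.le]
  have hrB' : volume.real B' = l * aA' := by simp [measureReal_def, hvolB', haA, hl0.le]
  rw [show f = density l A' B' from funext hfdef, show g = density l A B from funext hgdef]
  change ∫ u in Icc 0 1, secondMomentIntegrand l A B A' B' u = _
  rw [hsplit, measureReal_sdiff hA' hA'meas (hfin A hAsub),
    measureReal_sdiff hB' hB'meas (hfin B hBsub),
    measureReal_sdiff hAB (hAmeas.union hBmeas) (hfin _ subset_rfl),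
    measureReal_union hdisj hBmeas (hfin A hAsub) (hfin B hBsub),
    Real.volume_real_Icc_of_le zero_le_one, hrA, hrA', hrB, hrB']
  field_simp
  ring

open Classical in
/-- The key integral identity for the second moment of `1/(Tⁿ)'`:
`∫₀¹ (f/g)² f du = 1 + (λ⁻² - λ + λ(λ² - λ⁻¹)) (|A| - |A'|)`. -/
theorem stmt10 (l : ℝ) (hl : l ∈ Set.Ioo (0 : ℝ) 1)
    (A B A' B' : Set ℝ) (aA aA' : ℝ)
    (hAmeas : MeasurableSet A) (hBmeas : MeasurableSet B)
    (hA'meas : MeasurableSet A') (hB'meas : MeasurableSet B')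
    (hAsub : A ⊆ Set.Icc 0 1) (hBsub : B ⊆ Set.Icc 0 1)
    (hA' : A' ⊆ A) (hB' : B' ⊆ B) (hdisj : Disjoint A B)
    (hvolA : volume A = ENNReal.ofReal aA)
    (hvolA' : volume A' = ENNReal.ofReal aA')
    (hvolB : volume B = ENNReal.ofReal (l * aA))
    (hvolB' : volume B' = ENNReal.ofReal (l * aA'))
    (haA : 0 ≤ aA') (haA' : aA' ≤ aA) (haA1 : (1 + l) * aA < 1)
    (f g : ℝ → ℝ)
    (hfdef : ∀ u, f u = if u ∈ A' then l else if u ∈ B' then l⁻¹ else 1)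
    (hgdef : ∀ u, g u = if u ∈ A then l else if u ∈ B then l⁻¹ else 1) :
    (∫ u in Set.Icc (0 : ℝ) 1, (f u / g u) ^ 2 * f u)
      = 1 + ((l ^ 2)⁻¹ - l + l * (l ^ 2 - l⁻¹)) * (aA - aA') :=
  stmt10_general l hl A B A' B' aA aA' hAmeas hBmeas hA'meas hB'meas hAsub hBsub hA' hB' hdisj hvolA
    hvolA' hvolB hvolB' haA haA' f g hfdef hgdef
end

section
/- Let (Ω, 𝓕, μ, T) be an invertible nonsingular dynamical system on a probability space, and suppose there exists K > 0 and c > 0 such that ∫_Ω ((d μ∘Tⁿ/dμ))⁻² dμ ≤ K·(log(n+1))^c for all n ≥ 1. Then for μ-almost every x, ∑_{n=1}^∞ (dμ∘Tⁿ/dμ)(x) = ∞. -/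
open MeasureTheory ENNReal Filter Asymptotics

/-! By Markov's inequality applied to `((Tⁿ)')⁻²`, `μ {(Tⁿ)' ≤ 1/(n+1)}` is at most
`K (log (n+1))^c / (n+1)²`, which is summable. By Borel–Cantelli, almost every `x` satisfies
`(Tⁿ)'(x) > 1/(n+1)` for all large `n`, so the Radon–Nikodym sum at `x` dominates a tail of the
harmonic series. -/

lemma Real.summable_log_rpow_div_sq (c : ℝ) :
    Summable fun n : ℕ => Real.log n ^ c / (n : ℝ) ^ 2 := by
  have hO : (fun x : ℝ => Real.log x ^ c / x ^ 2) =O[atTop] fun x => x ^ (-(3 / 2) : ℝ) := by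
    have h := (isLittleO_log_rpow_rpow_atTop c (by norm_num : (0 : ℝ) < 1 / 2)).isBigO.mul
      (isBigO_refl (fun x : ℝ => (x ^ 2)⁻¹) atTop)
    refine h.congr' (Eventually.of_forall fun x => (div_eq_mul_inv _ _).symm) ?_
    filter_upwards [eventually_gt_atTop 0] with x hx
    rw [← Real.rpow_natCast, ← Real.rpow_neg hx.le, ← Real.rpow_add hx]
    norm_num
  exact summable_of_isBigO_nat' (Real.summable_nat_rpow.mpr (by norm_num))
    (hO.comp_tendsto tendsto_natCast_atTop_atTop)

lemma ENNReal.tsum_eq_top_of_eventually_inv_le {a : ℕ → ℝ≥0∞} (k : ℕ)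
    (h : ∀ᶠ n in atTop, ((n + k : ℕ) : ℝ≥0∞)⁻¹ ≤ a n) : ∑' n, a n = ⊤ := by
  by_contra hsum
  have hharm : Summable fun n : ℕ => ((n + k : ℕ) : ℝ)⁻¹ := by
    refine summable_of_isBigO_nat' (ENNReal.summable_toReal hsum) (IsBigO.of_bound' ?_)
    filter_upwards [h] with n hn
    have := ENNReal.toReal_mono (ENNReal.ne_top_of_tsum_ne_top hsum n) hn
    rw [ENNReal.toReal_inv, ENNReal.toReal_natCast] at this
    rwa [Real.norm_of_nonneg (by positivity), Real.norm_of_nonneg ENNReal.toReal_nonneg]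
  exact Real.not_summable_natCast_inv ((summable_nat_add_iff k).mp hharm)

lemma ae_eventually_lt_of_tsum_lintegral_div_ne_top {Ω : Type*} [MeasurableSpace Ω]
    {μ : Measure Ω} {g : ℕ → Ω → ℝ≥0∞} (hg : ∀ n, AEMeasurable (g n) μ)
    {t : ℕ → ℝ≥0∞} (ht₀ : ∀ n, t n ≠ 0) (ht : ∀ n, t n ≠ ⊤)
    (hsum : ∑' n, (∫⁻ x, g n x ∂μ) / t n ≠ ⊤) :
    ∀ᵐ x ∂μ, ∀ᶠ n in atTop, g n x < t n := by
  have hmeas : ∑' n, μ {x | t n ≤ g n x} ≠ ⊤ := ne_top_of_le_ne_top hsum <|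
    ENNReal.tsum_le_tsum fun n => meas_ge_le_lintegral_div (hg n) (ht₀ n) (ht n)
  filter_upwards [ae_eventually_notMem hmeas] with x hx
  simpa only [Set.mem_ofPred_eq, not_le] using hx

theorem stmt11_general {Ω : Type*} [MeasurableSpace Ω] (μ : Measure Ω)
    (S : Ω → Ω)
    (D : ℕ → Ω → ℝ≥0∞)
    (hD : ∀ n : ℕ, D n = (Measure.map (S^[n]) μ).rnDeriv μ)
    (K c : ℝ)
    (hbound : ∀ n : ℕ, 1 ≤ n →
      (∫⁻ x, ((D n x)⁻¹) ^ 2 ∂μ) ≤ ENNReal.ofReal (K * Real.log (n + 1) ^ c)) :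
    ∀ᵐ x ∂μ, (∑' n : ℕ, D (n + 1) x) = ⊤ := by
  have hmeas (n : ℕ) : AEMeasurable (fun x => (D (n + 1) x)⁻¹ ^ 2) μ := by
    rw [hD]
    exact ((Measure.measurable_rnDeriv _ _).inv.pow_const 2).aemeasurable
  have hsummable :
      Summable fun n : ℕ => K * (Real.log (n + 2 : ℕ) ^ c / ((n + 2 : ℕ) : ℝ) ^ 2) :=
    ((summable_nat_add_iff 2).mpr (Real.summable_log_rpow_div_sq c)).mul_left K
  have hsum : ∑' n : ℕ, (∫⁻ x, (D (n + 1) x)⁻¹ ^ 2 ∂μ) / ((n + 2 : ℕ) : ℝ≥0∞) ^ 2 ≠ ⊤ := by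
    refine ne_top_of_le_ne_top hsummable.tsum_ofReal_ne_top (ENNReal.tsum_le_tsum fun n => ?_)
    refine (ENNReal.div_le_div_right (hbound (n + 1) n.succ_pos) _).trans_eq ?_
    rw [← ENNReal.ofReal_natCast, ← ENNReal.ofReal_pow (Nat.cast_nonneg _),
      ← ENNReal.ofReal_div_of_pos (by positivity), mul_div_assoc]
    push_cast
    ring_nf
  filter_upwards [ae_eventually_lt_of_tsum_lintegral_div_ne_top hmeas (fun n => by positivity)
    (fun n => by simp) hsum] with x hx
  refine ENNReal.tsum_eq_top_of_eventually_inv_le 2 (hx.mono fun n hn => ?_)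
  exact ENNReal.inv_le_iff_inv_le.mp ((ENNReal.pow_lt_pow_left_iff two_ne_zero).mp hn).le

/-- If the second moments of `1/(Tⁿ)'` grow at most polylogarithmically, then
the Radon–Nikodym sums `∑ₙ (dμ∘Tⁿ/dμ)(x)` diverge almost everywhere. -/
theorem stmt11 {Ω : Type*} [MeasurableSpace Ω] (μ : Measure Ω) [IsProbabilityMeasure μ]
    (T S : Ω → Ω) (hT : Measurable T) (hS : Measurable S)
    (hTS : Function.LeftInverse S T) (hST : Function.RightInverse S T)
    (habs : Measure.map S μ ≪ μ) (habs' : μ ≪ Measure.map S μ)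
    (D : ℕ → Ω → ℝ≥0∞)
    (hD : ∀ n : ℕ, D n = (Measure.map (S^[n]) μ).rnDeriv μ)
    (K c : ℝ) (hK : 0 < K) (hc : 0 < c)
    (hbound : ∀ n : ℕ, 1 ≤ n →
      (∫⁻ x, ((D n x)⁻¹) ^ 2 ∂μ) ≤ ENNReal.ofReal (K * Real.log (n + 1) ^ c)) :
    ∀ᵐ x ∂μ, (∑' n : ℕ, D (n + 1) x) = ⊤ :=
  stmt11_general μ S D hD K c hbound
end
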